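/- arXiv:2310.14038 — 2 statements merged into one kernel-verified Lean document; each statement's English description precedes it below -/
import Mathlib

section
/- For integrable real random variables X, Y on a common probability space and α ∈ (0,1), CVaR is subadditive in the sense that CVaR_α(X + Y) ≤ CVaR_α(X) + CVaR_α(Y). -/
open MeasureTheory

noncomputable def cvarRV {Ω : Type*} [MeasurableSpace Ω] (α : ℝ) (μ : Measure Ω)
    (X : Ω → ℝ) : ℝ :=
  ⨅ z : ℝ, z + (∫ ω, max (X ω - z) 0 ∂μ) / (1 - α)

lemma cvar_bddBelow {Ω : Type*} [MeasurableSpace Ω] (μ : Measure Ω)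
    [IsProbabilityMeasure μ] (α : ℝ) (hα : α ∈ Set.Ioo (0 : ℝ) 1)
    (X : Ω → ℝ) (hX : Integrable X μ) :
    BddBelow (Set.range fun z : ℝ => z + (∫ ω, max (X ω - z) 0 ∂μ) / (1 - α)) := by
  obtain ⟨hα0, hα1⟩ := hα
  have h1α : 0 < 1 - α := by linarith
  refine ⟨∫ ω, X ω ∂μ, ?_⟩
  rintro _ ⟨z, rfl⟩
  have hint : Integrable (fun ω => max (X ω - z) 0) μ :=
    (hX.sub (integrable_const z)).pos_part
  have h0 : 0 ≤ ∫ ω, max (X ω - z) 0 ∂μ :=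
    integral_nonneg fun ω => le_max_right _ _
  have h2 : ∫ ω, (X ω - z) ∂μ ≤ ∫ ω, max (X ω - z) 0 ∂μ :=
    integral_mono (hX.sub (integrable_const z)) hint fun ω => le_max_left _ _
  have h3 : ∫ ω, (X ω - z) ∂μ = (∫ ω, X ω ∂μ) - z := by
    rw [integral_sub hX (integrable_const z), integral_const]
    simp
  have h4 : (∫ ω, max (X ω - z) 0 ∂μ) ≤ (∫ ω, max (X ω - z) 0 ∂μ) / (1 - α) := by
    rw [le_div_iff₀ h1α]
    nlinarith
  linarith

/-- CVaR is subadditive: `CVaR_α(X + Y) ≤ CVaR_α(X) + CVaR_α(Y)`. -/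
theorem cvar_subadditive {Ω : Type*} [MeasurableSpace Ω] (μ : Measure Ω)
    [IsProbabilityMeasure μ] (α : ℝ) (hα : α ∈ Set.Ioo (0 : ℝ) 1)
    (X Y : Ω → ℝ) (hX : Integrable X μ) (hY : Integrable Y μ) :
    cvarRV α μ (fun ω => X ω + Y ω) ≤ cvarRV α μ X + cvarRV α μ Y := by
  obtain ⟨hα0, hα1⟩ := hα
  have h1α : 0 < 1 - α := by linarith
  unfold cvarRV
  refine le_ciInf_add_ciInf fun z₁ z₂ => ?_
  refine le_trans (ciInf_le (cvar_bddBelow μ α ⟨hα0, hα1⟩ _ (hX.add hY)) (z₁ + z₂)) ?_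
  have hintX : Integrable (fun ω => max (X ω - z₁) 0) μ :=
    (hX.sub (integrable_const z₁)).pos_part
  have hintY : Integrable (fun ω => max (Y ω - z₂) 0) μ :=
    (hY.sub (integrable_const z₂)).pos_part
  have hmono : ∫ ω, max (X ω + Y ω - (z₁ + z₂)) 0 ∂μ
      ≤ (∫ ω, max (X ω - z₁) 0 ∂μ) + ∫ ω, max (Y ω - z₂) 0 ∂μ := by
    rw [← integral_add hintX hintY]
    refine integral_mono ((hX.add hY).sub (integrable_const (z₁ + z₂))).pos_part
      (hintX.add hintY) fun ω => ?_
    have : X ω + Y ω - (z₁ + z₂) ≤ max (X ω - z₁) 0 + max (Y ω - z₂) 0 := by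
      have := le_max_left (X ω - z₁) 0
      have := le_max_left (Y ω - z₂) 0
      linarith
    exact max_le this (by positivity)
  calc z₁ + z₂ + (∫ ω, max (X ω + Y ω - (z₁ + z₂)) 0 ∂μ) / (1 - α)
        ≤ z₁ + z₂ + ((∫ ω, max (X ω - z₁) 0 ∂μ) + ∫ ω, max (Y ω - z₂) 0 ∂μ) / (1 - α) := by
          gcongr
      _ = z₁ + (∫ ω, max (X ω - z₁) 0 ∂μ) / (1 - α)
          + (z₂ + (∫ ω, max (Y ω - z₂) 0 ∂μ) / (1 - α)) := by ring
end

section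
/- Let ν = (1/N) Σᵢ δ_{ω̂ᵢ} be an empirical measure on ℝ, θ > 0, and f(ω) = max{ω + d - z, -z, 0} for fixed d, z ∈ ℝ. Then the worst-case expectation sup { E^μ[f] : μ probability measure on ℝ, W₁(μ, ν) ≤ θ } equals the infimum over λ ≥ 1 and s₁,…,s_N of λθ + (1/N) Σᵢ sᵢ subject to ω̂ᵢ + d - z ≤ sᵢ, sᵢ + z ≥ 0 and sᵢ ≥ 0 for all i. -/
open MeasureTheory
open scoped ENNReal NNReal

/-- The order-1 Wasserstein distance on `ℝ`, as the infimum over couplings of the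
transport cost `∫ |ω - ω'|`. -/
noncomputable def W1 (μ ν : Measure ℝ) : ℝ≥0∞ :=
  ⨅ κ ∈ {κ : Measure (ℝ × ℝ) | κ.map Prod.fst = μ ∧ κ.map Prod.snd = ν},
    ∫⁻ p, ENNReal.ofReal |p.1 - p.2| ∂κ

/-!
The loss `f` is `1`-Lipschitz, so along any coupling of `μ` and `ν` the difference
`∫ f dμ - ∫ f dν` is at most the transport cost; hence every `μ` in the ball has
`∫ f dμ ≤ ∫ f dν + θ`. Conversely `f` grows with slope `1` at `+∞`: moving a fraction `t` of `ν`
by `θ / t` costs exactly `θ` and raises the expectation by `θ - O(t)`, so the bound is the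
supremum. It equals `θ + (1/N) ∑ f (ω̂ᵢ)`, which is also the dual value, attained at
`λ = 1`, `sᵢ = f (ω̂ᵢ)`: the three constraints on `sᵢ` say exactly `f (ω̂ᵢ) ≤ sᵢ`.
-/

open Filter Topology Set

lemma LipschitzWith.integrable_of_integrable_id {f : ℝ → ℝ} {K : ℝ≥0} (hf : LipschitzWith K f)
    {μ : Measure ℝ} [IsFiniteMeasure μ] (hμ : Integrable id μ) : Integrable f μ := by
  refine ((integrable_const ‖f 0‖).add (hμ.norm.const_mul K)).mono'
    hf.continuous.aestronglyMeasurable (ae_of_all _ fun x => ?_)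
  have := hf.norm_sub_le x 0
  simp only [sub_zero] at this
  simp only [Pi.add_apply, id]
  linarith [norm_sub_norm_le (f x) (f 0)]

section Coupling

variable {μ ν : Measure ℝ} {κ : Measure (ℝ × ℝ)}

lemma W1_le_lintegral (h₁ : κ.map Prod.fst = μ) (h₂ : κ.map Prod.snd = ν) :
    W1 μ ν ≤ ∫⁻ p, ENNReal.ofReal |p.1 - p.2| ∂κ :=
  iInf₂_le κ ⟨h₁, h₂⟩

lemma W1_self (μ : Measure ℝ) : W1 μ μ = 0 := by
  have hdiag : Measurable fun x : ℝ => (x, x) := by fun_prop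
  refine le_antisymm ((W1_le_lintegral (κ := μ.map fun x => (x, x)) ?_ ?_).trans_eq ?_) bot_le
  · rw [Measure.map_map measurable_fst hdiag]; exact Measure.map_id
  · rw [Measure.map_map measurable_snd hdiag]; exact Measure.map_id
  · rw [lintegral_map (by fun_prop) hdiag]; simp

lemma W1_add_le (μ₁ μ₂ ν₁ ν₂ : Measure ℝ) :
    W1 (μ₁ + μ₂) (ν₁ + ν₂) ≤ W1 μ₁ ν₁ + W1 μ₂ ν₂ := by
  simp only [W1, ENNReal.iInf_add, ENNReal.add_iInf]
  refine le_iInf₂ fun κ₁ ⟨h₁, h₁'⟩ => le_iInf₂ fun κ₂ ⟨h₂, h₂'⟩ => ?_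
  rw [← lintegral_add_measure]
  exact iInf₂_le _ ⟨by rw [Measure.map_add _ _ measurable_fst, h₁, h₂],
    by rw [Measure.map_add _ _ measurable_snd, h₁', h₂']⟩

lemma W1_smul_map_add_le (ν : Measure ℝ) (c : ℝ≥0∞) (s : ℝ) :
    W1 (c • ν.map (· + s)) (c • ν) ≤ c * ν univ * ENNReal.ofReal |s| := by
  have hshift : Measurable fun x : ℝ => (x + s, x) := by fun_prop
  refine (W1_le_lintegral (κ := c • ν.map fun x => (x + s, x)) ?_ ?_).trans_eq ?_
  · rw [Measure.map_smul, Measure.map_map measurable_fst hshift]; rfl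
  · rw [Measure.map_smul, Measure.map_map measurable_snd hshift]; exact congrArg _ Measure.map_id
  · rw [lintegral_smul_measure, lintegral_map (by fun_prop) hshift]
    simp only [add_sub_cancel_left, lintegral_const]
    ring

lemma integral_sub_integral_le_of_coupling {f : ℝ → ℝ} (hf : LipschitzWith 1 f)
    (hfν : Integrable f ν) (h₁ : κ.map Prod.fst = μ) (h₂ : κ.map Prod.snd = ν)
    (hcost : ∫⁻ p, ENNReal.ofReal |p.1 - p.2| ∂κ ≠ ∞) :
    ∫ x, f x ∂μ - ∫ x, f x ∂ν ≤ (∫⁻ p, ENNReal.ofReal |p.1 - p.2| ∂κ).toReal := by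
  have hlip : ∀ x y, |f x - f y| ≤ |x - y| := fun x y => by
    simpa [Real.dist_eq] using hf.dist_le_mul x y
  have hc : Integrable (fun p : ℝ × ℝ => |p.1 - p.2|) κ :=
    (integrable_toReal_of_lintegral_ne_top (by fun_prop) hcost).congr
      (ae_of_all _ fun p => ENNReal.toReal_ofReal (abs_nonneg _))
  have hf₂ : Integrable (fun p : ℝ × ℝ => f p.2) κ := by
    rw [← h₂] at hfν
    exact (integrable_map_measure hf.continuous.aestronglyMeasurable (by fun_prop)).mp hfν
  have hf₁ : Integrable (fun p : ℝ × ℝ => f p.1) κ :=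
    (hf₂.norm.add hc).mono' (hf.continuous.comp continuous_fst).aestronglyMeasurable
      (ae_of_all _ fun p => by
        simp only [Pi.add_apply, Real.norm_eq_abs]
        linarith [abs_sub_abs_le_abs_sub (f p.1) (f p.2), hlip p.1 p.2])
  rw [← h₁, ← h₂, integral_map (by fun_prop) hf.continuous.aestronglyMeasurable,
    integral_map (by fun_prop) hf.continuous.aestronglyMeasurable, ← integral_sub hf₁ hf₂,
    ← integral_eq_lintegral_of_nonneg_ae (ae_of_all _ fun p => abs_nonneg _) (by fun_prop)]
  exact integral_mono (hf₁.sub hf₂) hc fun p => (le_abs_self _).trans (hlip p.1 p.2)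

end Coupling

theorem integral_sub_integral_le_W1 {μ ν : Measure ℝ} {f : ℝ → ℝ} (hf : LipschitzWith 1 f)
    (hfν : Integrable f ν) (hW : W1 μ ν ≠ ∞) :
    ∫ x, f x ∂μ - ∫ x, f x ∂ν ≤ (W1 μ ν).toReal := by
  rw [← ENNReal.ofReal_le_iff_le_toReal hW]
  refine le_iInf₂ fun κ ⟨h₁, h₂⟩ => ?_
  by_cases hcost : ∫⁻ p, ENNReal.ofReal |p.1 - p.2| ∂κ = ∞
  · exact hcost ▸ le_top
  · exact (ENNReal.ofReal_le_iff_le_toReal hcost).2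
      (integral_sub_integral_le_of_coupling hf hfν h₁ h₂ hcost)

noncomputable def shiftFraction (ν : Measure ℝ) (t s : ℝ) : Measure ℝ :=
  ENNReal.ofReal (1 - t) • ν + ENNReal.ofReal t • ν.map (· + s)

section ShiftFraction

variable {ν : Measure ℝ} {t : ℝ}

lemma ofReal_one_sub_add_ofReal (ht₀ : 0 ≤ t) (ht₁ : t ≤ 1) :
    ENNReal.ofReal (1 - t) + ENNReal.ofReal t = 1 := by
  rw [← ENNReal.ofReal_add (by linarith) ht₀, sub_add_cancel, ENNReal.ofReal_one]

lemma isProbabilityMeasure_shiftFraction [IsProbabilityMeasure ν] (ht₀ : 0 ≤ t) (ht₁ : t ≤ 1)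
    (s : ℝ) : IsProbabilityMeasure (shiftFraction ν t s) := by
  constructor
  simp only [shiftFraction, Measure.add_apply, Measure.smul_apply, smul_eq_mul,
    Measure.map_apply (measurable_add_const s) MeasurableSet.univ, preimage_univ,
    measure_univ, mul_one, ofReal_one_sub_add_ofReal ht₀ ht₁]

lemma W1_shiftFraction_le [IsProbabilityMeasure ν] (ht₀ : 0 ≤ t) (ht₁ : t ≤ 1) (s : ℝ) :
    W1 (shiftFraction ν t s) ν ≤ ENNReal.ofReal (t * |s|) := by
  have hsplit : ν = ENNReal.ofReal (1 - t) • ν + ENNReal.ofReal t • ν := by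
    rw [← add_smul, ofReal_one_sub_add_ofReal ht₀ ht₁, one_smul]
  calc W1 (shiftFraction ν t s) ν
      = W1 (shiftFraction ν t s) (ENNReal.ofReal (1 - t) • ν + ENNReal.ofReal t • ν) := by
        rw [← hsplit]
    _ ≤ W1 (ENNReal.ofReal (1 - t) • ν) (ENNReal.ofReal (1 - t) • ν)
        + W1 (ENNReal.ofReal t • ν.map (· + s)) (ENNReal.ofReal t • ν) := W1_add_le ..
    _ ≤ ENNReal.ofReal (t * |s|) := by
        rw [W1_self, zero_add, ENNReal.ofReal_mul ht₀]
        simpa using W1_smul_map_add_le ν (ENNReal.ofReal t) s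

lemma integral_shiftFraction {f : ℝ → ℝ} (hf : Integrable f ν)
    (hf' : Integrable (fun x => f (x + s)) ν) (ht₀ : 0 ≤ t) (ht₁ : t ≤ 1) :
    ∫ x, f x ∂(shiftFraction ν t s) = (1 - t) * ∫ x, f x ∂ν + t * ∫ x, f (x + s) ∂ν := by
  have hshift : MeasurableEmbedding (· + s : ℝ → ℝ) :=
    (MeasurableEquiv.addRight s).measurableEmbedding
  have hfs : Integrable f (ν.map (· + s)) := hshift.integrable_map_iff.2 hf'
  rw [shiftFraction, integral_add_measure (hf.smul_measure ENNReal.ofReal_ne_top)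
    (hfs.smul_measure ENNReal.ofReal_ne_top), integral_smul_measure, integral_smul_measure,
    hshift.integral_map, ENNReal.toReal_ofReal ht₀,
    ENNReal.toReal_ofReal (by linarith), smul_eq_mul, smul_eq_mul]

lemma integral_shiftFraction_ge [IsProbabilityMeasure ν] {f : ℝ → ℝ} (hf : LipschitzWith 1 f)
    {b : ℝ} (hfb : ∀ x, x + b ≤ f x) (hν : Integrable id ν) (ht₀ : 0 < t) (ht₁ : t ≤ 1)
    (θ : ℝ) :
    ∫ x, f x ∂ν + θ - t * (∫ x, f x ∂ν - (∫ x, x ∂ν + b)) ≤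
      ∫ x, f x ∂(shiftFraction ν t (θ / t)) := by
  have hshift : LipschitzWith 1 fun x => f (x + θ / t) := by
    simpa [Function.comp_def] using hf.comp (isometry_add_right (θ / t)).lipschitz
  have hgain : ∫ x, x ∂ν + (θ / t + b) ≤ ∫ x, f (x + θ / t) ∂ν :=
    calc ∫ x, x ∂ν + (θ / t + b) = ∫ x, (x + (θ / t + b)) ∂ν := by
          rw [integral_add (f := fun x => x) hν (integrable_const _)]; simp
      _ ≤ ∫ x, f (x + θ / t) ∂ν :=
          integral_mono (hν.add (integrable_const _)) (hshift.integrable_of_integrable_id hν)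
            fun x => by simpa [add_assoc] using hfb (x + θ / t)
  have := mul_le_mul_of_nonneg_left hgain ht₀.le
  rw [mul_add, mul_add, mul_div_cancel₀ _ ht₀.ne'] at this
  rw [integral_shiftFraction (hf.integrable_of_integrable_id hν)
    (hshift.integrable_of_integrable_id hν) ht₀.le ht₁]
  linear_combination this

end ShiftFraction

theorem sSup_integral_W1_ball {f : ℝ → ℝ} (hf : LipschitzWith 1 f) {b : ℝ}
    (hfb : ∀ x, x + b ≤ f x) (ν : Measure ℝ) [IsProbabilityMeasure ν] (hν : Integrable id ν)
    {θ : ℝ} (hθ : 0 ≤ θ) :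
    sSup {e : ℝ | ∃ μ : Measure ℝ, IsProbabilityMeasure μ ∧ W1 μ ν ≤ ENNReal.ofReal θ ∧
        e = ∫ x, f x ∂μ} = ∫ x, f x ∂ν + θ := by
  set S := {e : ℝ | ∃ μ : Measure ℝ, IsProbabilityMeasure μ ∧ W1 μ ν ≤ ENNReal.ofReal θ ∧
    e = ∫ x, f x ∂μ}
  have hfν : Integrable f ν := hf.integrable_of_integrable_id hν
  have hub : ∀ e ∈ S, e ≤ ∫ x, f x ∂ν + θ := by
    rintro _ ⟨μ, -, hW, rfl⟩
    have := integral_sub_integral_le_W1 hf hfν (ne_top_of_le_ne_top ENNReal.ofReal_ne_top hW)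
    linarith [ENNReal.toReal_le_of_le_ofReal hθ hW]
  set c := ∫ x, f x ∂ν - (∫ x, x ∂ν + b)
  have hlb : ∀ t ∈ Ioo (0 : ℝ) 1, ∫ x, f x ∂ν + θ - t * c ≤ sSup S := by
    rintro t ⟨ht₀, ht₁⟩
    refine le_csSup_of_le ⟨_, hub⟩ ⟨shiftFraction ν t (θ / t),
      isProbabilityMeasure_shiftFraction ht₀.le ht₁.le _, ?_, rfl⟩
      (integral_shiftFraction_ge hf hfb hν ht₀ ht₁.le θ)
    simpa [abs_of_nonneg (div_nonneg hθ ht₀.le), mul_div_cancel₀ _ ht₀.ne']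
      using W1_shiftFraction_le (ν := ν) ht₀.le ht₁.le (θ / t)
  have hlim : Tendsto (fun t : ℝ => ∫ x, f x ∂ν + θ - t * c) (𝓝[>] 0) (𝓝 (∫ x, f x ∂ν + θ)) := by
    simpa using (((tendsto_id (x := 𝓝 (0 : ℝ))).mul_const c).const_sub
      (∫ x, f x ∂ν + θ)).mono_left nhdsWithin_le_nhds
  exact le_antisymm (csSup_le ⟨_, ν, inferInstance, by simp [W1_self], rfl⟩ hub)
    (le_of_tendsto hlim (mem_of_superset (Ioo_mem_nhdsGT one_pos) hlb))

section Empirical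

variable {α ι : Type*} [MeasurableSpace α] [Fintype ι] (a : ι → α)

lemma integrable_smul_sum_dirac [MeasurableSingletonClass α] {c : ℝ≥0∞} (hc : c ≠ ∞)
    (g : α → ℝ) :
    Integrable g (c • ∑ i, Measure.dirac (a i)) :=
  (integrable_finsetSum_measure.2 fun _ _ => integrable_dirac enorm_lt_top).smul_measure hc

lemma integral_smul_sum_dirac [MeasurableSingletonClass α] (c : ℝ≥0∞) (g : α → ℝ) :
    ∫ x, g x ∂(c • ∑ i, Measure.dirac (a i)) = c.toReal * ∑ i, g (a i) := by
  rw [integral_smul_measure,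
    integral_finsetSum_measure fun _ _ => integrable_dirac enorm_lt_top]
  simp [integral_dirac]

lemma isProbabilityMeasure_empirical [Nonempty ι] :
    IsProbabilityMeasure ((Fintype.card ι : ℝ≥0∞)⁻¹ • ∑ i, Measure.dirac (a i)) := by
  constructor
  simp [ENNReal.inv_mul_cancel]

end Empirical

lemma isLeast_dual_objective {ι : Type*} [Fintype ι] (g : ι → ℝ) {θ c : ℝ} (hθ : 0 ≤ θ)
    (hc : 0 ≤ c) :
    IsLeast {v : ℝ | ∃ (lam : ℝ) (s : ι → ℝ), 1 ≤ lam ∧ (∀ i, g i ≤ s i) ∧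
      v = lam * θ + c * ∑ i, s i} (θ + c * ∑ i, g i) := by
  refine ⟨⟨1, g, le_rfl, fun _ => le_rfl, by ring⟩, ?_⟩
  rintro _ ⟨lam, s, hlam, hs, rfl⟩
  have := mul_le_mul_of_nonneg_left (Finset.sum_le_sum (s := .univ) fun i _ => hs i) hc
  nlinarith

/-- Kantorovich-duality reformulation of the worst-case expectation of the piecewise
affine loss `ω ↦ max{ω + d - z, -z, 0}` over a Wasserstein ball around the empirical
distribution `ν = (1/N) ∑ᵢ δ_{ω̂ᵢ}`. -/
theorem worst_case_expectation_dual (N : ℕ) (hN : 0 < N) (ωhat : Fin N → ℝ)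
    (θ : ℝ) (hθ : 0 < θ) (d z : ℝ) :
    sSup {e : ℝ | ∃ μ : Measure ℝ, IsProbabilityMeasure μ ∧
        W1 μ ((N : ℝ≥0∞)⁻¹ • ∑ i : Fin N, Measure.dirac (ωhat i)) ≤ ENNReal.ofReal θ ∧
        e = ∫ x, max (x + d - z) (max (-z) 0) ∂μ}
      = sInf {v : ℝ | ∃ (lam : ℝ) (s : Fin N → ℝ), 1 ≤ lam ∧
          (∀ i, ωhat i + d - z ≤ s i ∧ 0 ≤ s i + z ∧ 0 ≤ s i) ∧
          v = lam * θ + (1 / (N : ℝ)) * ∑ i, s i} := by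
  set f : ℝ → ℝ := fun x => max (x + d - z) (max (-z) 0)
  have hf : LipschitzWith 1 f := LipschitzWith.max_const
    (LipschitzWith.of_le_add fun x y => by linarith [Real.dist_eq x y, le_abs_self (x - y)]) _
  have hfb : ∀ x, x + (d - z) ≤ f x := fun x => by simp [f, add_sub_assoc]
  have hfeas : ∀ x s, (x + d - z ≤ s ∧ 0 ≤ s + z ∧ 0 ≤ s) ↔ f x ≤ s := fun x s => by
    simp [f, neg_le_iff_add_nonneg]
  have hNinv : (N : ℝ≥0∞)⁻¹ ≠ ∞ := ENNReal.inv_ne_top.2 (by exact_mod_cast hN.ne')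
  have : NeZero N := ⟨hN.ne'⟩
  have : IsProbabilityMeasure ((N : ℝ≥0∞)⁻¹ • ∑ i : Fin N, Measure.dirac (ωhat i)) := by
    simpa using isProbabilityMeasure_empirical ωhat
  simp_rw [hfeas]
  rw [sSup_integral_W1_ball hf hfb _ (integrable_smul_sum_dirac ωhat hNinv id) hθ.le,
    integral_smul_sum_dirac ωhat, ((isLeast_dual_objective _ hθ.le (by positivity))).csInf_eq]
  simp [add_comm]
end
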